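/- The function D(λ) = 2(1 − Gd(|λ|)/sinh(|λ|)), where Gd(x) = 2 arctan(eˣ) − π/2 is the Gudermannian function, satisfies: (a) D(λ) → 0 as λ → 0, with D(λ) = (2/3)λ² + O(λ⁴); (b) D is monotonically increasing on (0,∞); and (c) lim_{λ→∞} D(λ) = 2. -/

import Mathlib

open Real Filter Asymptotics

/-- The Gudermannian function `Gd(x) = 2 arctan(eˣ) − π/2`. -/
noncomputable def Gd (x : ℝ) : ℝ := 2 * Real.arctan (Real.exp x) - Real.pi / 2

/-- The `m → ∞` Mazur lower bound on the spin Drude weight,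
`D(λ) = 2(1 − Gd(|λ|)/sinh(|λ|))`. -/
noncomputable def Denv (l : ℝ) : ℝ := 2 * (1 - Gd |l| / Real.sinh |l|)

/-!
All inequalities come from comparing derivatives starting from a common value at `0`, using
`Gd' = 1 / cosh`. The two-sided bound `sinh x (1 - x²/3) ≤ Gd x ≤ sinh x (1 - x²/3 + x⁴)` on
`[0, 1]` gives the expansion at `0`; `Gd / sinh` decreases because its derivative has the sign of
`sinh x - Gd x cosh² x < 0`; and `Gd → π/2` while `sinh → ∞`.
-/

open Set

section Comparison

variable {f g f' g' : ℝ → ℝ} {a b : ℝ}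

theorem le_of_hasDerivAt_le (hab : a ≤ b) (hf : ∀ x, HasDerivAt f (f' x) x)
    (hg : ∀ x, HasDerivAt g (g' x) x) (ha : f a ≤ g a) (h' : ∀ x ∈ Ioo a b, f' x ≤ g' x) :
    f b ≤ g b := by
  have hmono : MonotoneOn (g - f) (Icc a b) := by
    refine monotoneOn_of_hasDerivWithinAt_nonneg (convex_Icc a b) (f' := g' - f') ?_
      (fun x _ => ((hg x).sub (hf x)).hasDerivWithinAt) ?_
    · exact fun x _ => ((hg x).sub (hf x)).continuousAt.continuousWithinAt
    · intro x hx
      rw [interior_Icc] at hx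
      exact sub_nonneg.mpr (h' x hx)
  have := hmono (left_mem_Icc.mpr hab) (right_mem_Icc.mpr hab) hab
  simp only [Pi.sub_apply] at this
  linarith

theorem lt_of_hasDerivAt_lt (hab : a < b) (hf : ∀ x, HasDerivAt f (f' x) x)
    (hg : ∀ x, HasDerivAt g (g' x) x) (ha : f a ≤ g a) (h' : ∀ x ∈ Ioo a b, f' x < g' x) :
    f b < g b := by
  have hmono : StrictMonoOn (g - f) (Icc a b) := by
    refine strictMonoOn_of_hasDerivWithinAt_pos (convex_Icc a b) (f' := g' - f') ?_
      (fun x _ => ((hg x).sub (hf x)).hasDerivWithinAt) ?_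
    · exact fun x _ => ((hg x).sub (hf x)).continuousAt.continuousWithinAt
    · intro x hx
      rw [interior_Icc] at hx
      exact sub_pos.mpr (h' x hx)
  have := hmono (left_mem_Icc.mpr hab.le) (right_mem_Icc.mpr hab.le) hab
  simp only [Pi.sub_apply] at this
  linarith

end Comparison

theorem sinh_le_self_mul_cosh {x : ℝ} (hx : 0 ≤ x) : sinh x ≤ x * cosh x := by
  refine le_of_hasDerivAt_le hx hasDerivAt_sinh
    (fun y => (hasDerivAt_id y).mul (hasDerivAt_cosh y)) (by simp) fun y hy => ?_
  have : 0 ≤ y * sinh y := mul_nonneg hy.1.le (sinh_nonneg_iff.mpr hy.1.le)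
  simp only [id]
  linarith

theorem cosh_le_one_add_sq {x : ℝ} (hx : |x| ≤ 1) : cosh x ≤ 1 + x ^ 2 := by
  have hx2 : |x ^ 2 / 2| ≤ 1 := by
    rw [abs_of_nonneg (by positivity)]
    nlinarith [sq_abs x, abs_nonneg x]
  have := (abs_le.mp (abs_exp_sub_one_le hx2)).2
  rw [abs_of_nonneg (by positivity)] at this
  linarith [cosh_le_exp_half_sq x]

theorem hasDerivAt_Gd (x : ℝ) : HasDerivAt Gd (cosh x)⁻¹ x := by
  have h : HasDerivAt Gd (2 * (1 / (1 + exp x ^ 2) * exp x)) x :=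
    (((hasDerivAt_arctan (exp x)).comp x (hasDerivAt_exp x)).const_mul 2).sub_const (π / 2)
  convert h using 1
  rw [cosh_eq, exp_neg]
  field_simp
  ring

@[simp]
theorem Gd_zero : Gd 0 = 0 := by
  simp only [Gd, exp_zero, arctan_one]
  ring

theorem strictMono_Gd : StrictMono Gd :=
  strictMono_of_hasDerivAt_pos hasDerivAt_Gd fun x => by positivity

theorem Gd_pos {x : ℝ} (hx : 0 < x) : 0 < Gd x := Gd_zero ▸ strictMono_Gd hx

theorem tendsto_Gd_atTop : Tendsto Gd atTop (nhds (π / 2)) := by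
  have h : Tendsto Gd atTop (nhds (2 * (π / 2) - π / 2)) :=
    ((tendsto_nhds_of_tendsto_nhdsWithin tendsto_arctan_atTop).comp
      tendsto_exp_atTop).const_mul 2 |>.sub_const (π / 2)
  rwa [show 2 * (π / 2) - π / 2 = π / 2 by ring] at h

theorem sinh_mul_le_Gd {x : ℝ} (hx : 0 ≤ x) : sinh x * (1 - x ^ 2 / 3) ≤ Gd x := by
  have hd (y : ℝ) : HasDerivAt (fun z => sinh z * (1 - z ^ 2 / 3))
      (cosh y * (1 - y ^ 2 / 3) + sinh y * (-(2 * y) / 3)) y := by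
    refine (hasDerivAt_sinh y).mul ?_
    exact (((hasDerivAt_pow 2 y).div_const 3).const_sub 1).congr_deriv (by ring)
  refine le_of_hasDerivAt_le hx hd hasDerivAt_Gd (by simp) fun y hy => ?_
  have hc := cosh_pos y
  have hs : 0 ≤ sinh y := sinh_nonneg_iff.mpr hy.1.le
  have h1 := sinh_le_self_mul_cosh hy.1.le
  rw [← one_div, le_div_iff₀ hc]
  nlinarith [cosh_sq_sub_sinh_sq y, mul_nonneg (mul_nonneg hc.le hy.1.le) (sub_nonneg.mpr h1),
    mul_nonneg hs (sub_nonneg.mpr h1)]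

theorem Gd_le_sinh_mul {x : ℝ} (hx : 0 ≤ x) (hx1 : x ≤ 1) :
    Gd x ≤ sinh x * (1 - x ^ 2 / 3 + x ^ 4) := by
  have hd (y : ℝ) : HasDerivAt (fun z => sinh z * (1 - z ^ 2 / 3 + z ^ 4))
      (cosh y * (1 - y ^ 2 / 3 + y ^ 4) + sinh y * (-(2 * y) / 3 + 4 * y ^ 3)) y := by
    refine (hasDerivAt_sinh y).mul ?_
    exact ((((hasDerivAt_pow 2 y).div_const 3).const_sub 1).add (hasDerivAt_pow 4 y)).congr_deriv
      (by ring)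
  refine le_of_hasDerivAt_le hx hasDerivAt_Gd hd (by simp) fun y hy => ?_
  obtain ⟨hy0, hyx⟩ := hy
  have hy1 : y < 1 := hyx.trans_le hx1
  have hc := cosh_pos y
  have hs : y ≤ sinh y := self_le_sinh_iff.mpr hy0.le
  have h1 := sinh_le_self_mul_cosh hy0.le
  have h2 := cosh_le_one_add_sq (abs_le.mpr ⟨by linarith, hy1.le⟩)
  rw [← one_div, div_le_iff₀ hc]
  nlinarith [cosh_sq_sub_sinh_sq y, one_le_cosh y,
    mul_nonneg (mul_nonneg hc.le hy0.le) (sub_nonneg.mpr h1),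
    mul_nonneg (hy0.le.trans hs) (sub_nonneg.mpr h1), mul_pos hc hc,
    pow_le_pow_left₀ hy0.le hy1.le 2]

theorem abs_Gd_div_sinh_sub_le {x : ℝ} (hx : 0 < x) (hx1 : x ≤ 1) :
    |Gd x / sinh x - (1 - x ^ 2 / 3)| ≤ x ^ 4 := by
  have hs : 0 < sinh x := sinh_pos_iff.mpr hx
  rw [abs_le, le_sub_iff_add_le, sub_le_iff_le_add, le_div_iff₀ hs, div_le_iff₀ hs]
  constructor <;> nlinarith [sinh_mul_le_Gd hx.le, Gd_le_sinh_mul hx.le hx1, pow_pos hx 4]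

theorem sinh_lt_Gd_mul_cosh_sq {x : ℝ} (hx : 0 < x) : sinh x < Gd x * cosh x ^ 2 := by
  have hd (y : ℝ) : HasDerivAt (fun z => Gd z * cosh z ^ 2)
      (cosh y + Gd y * (2 * cosh y * sinh y)) y := by
    refine ((hasDerivAt_Gd y).mul ((hasDerivAt_cosh y).fun_pow 2)).congr_deriv ?_
    field_simp [(cosh_pos y).ne']
    ring
  refine lt_of_hasDerivAt_lt hx hasDerivAt_sinh hd (by simp) fun y hy => ?_
  have := sinh_pos_iff.mpr hy.1
  have := cosh_pos y
  have := Gd_pos hy.1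
  simp only [lt_add_iff_pos_right]
  positivity

theorem strictAntiOn_Gd_div_sinh : StrictAntiOn (fun x => Gd x / sinh x) (Ioi 0) := by
  have hd {x : ℝ} (hx : 0 < x) : HasDerivAt (fun x => Gd x / sinh x)
      (((cosh x)⁻¹ * sinh x - Gd x * cosh x) / sinh x ^ 2) x :=
    (hasDerivAt_Gd x).div (hasDerivAt_sinh x) (sinh_pos_iff.mpr hx).ne'
  refine strictAntiOn_of_hasDerivWithinAt_neg (convex_Ioi 0)
    (fun x hx => (hd hx).continuousAt.continuousWithinAt)
    (fun x hx => (hd (interior_Ioi.subset hx)).hasDerivWithinAt) fun x hx => ?_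
  rw [interior_Ioi] at hx
  have hc := cosh_pos x
  have key : (cosh x)⁻¹ * sinh x - Gd x * cosh x = (sinh x - Gd x * cosh x ^ 2) / cosh x := by
    field_simp
  rw [key]
  exact div_neg_of_neg_of_pos (div_neg_of_neg_of_pos (sub_neg.mpr (sinh_lt_Gd_mul_cosh_sq hx)) hc)
    (by have := sinh_pos_iff.mpr hx; positivity)

theorem tendsto_sinh_atTop : Tendsto sinh atTop atTop :=
  tendsto_atTop_mono' atTop ((eventually_ge_atTop 0).mono fun _ hx => self_le_sinh_iff.mpr hx)
    tendsto_id

theorem tendsto_Gd_div_sinh_atTop : Tendsto (fun x => Gd x / sinh x) atTop (nhds 0) :=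
  tendsto_Gd_atTop.div_atTop tendsto_sinh_atTop

-- The junk value `0 / 0 = 0` makes `Denv 0 = 2`.
theorem abs_Denv_sub_le {l : ℝ} (hl : l ≠ 0) (hl1 : |l| ≤ 1) :
    |Denv l - 2 / 3 * l ^ 2| ≤ 2 * l ^ 4 := by
  have key : Denv l - 2 / 3 * l ^ 2 = -2 * (Gd |l| / sinh |l| - (1 - |l| ^ 2 / 3)) := by
    rw [Denv, sq_abs]; ring
  have h4 : |l| ^ 4 = l ^ 4 := by rw [← abs_pow, abs_of_nonneg (by positivity)]
  rw [key, abs_mul, ← h4, abs_neg, abs_two]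
  gcongr
  exact abs_Gd_div_sinh_sub_le (abs_pos.mpr hl) hl1

theorem isBigO_Denv_sub :
    (fun l : ℝ => Denv l - 2 / 3 * l ^ 2) =O[nhdsWithin 0 {0}ᶜ] fun l => l ^ 4 := by
  refine IsBigO.of_bound 2 ?_
  filter_upwards [self_mem_nhdsWithin,
    nhdsWithin_le_nhds (Metric.closedBall_mem_nhds (0 : ℝ) one_pos)] with l hl0 hl1
  rw [Real.norm_eq_abs, Real.norm_of_nonneg (by positivity)]
  exact abs_Denv_sub_le hl0 (by simpa using hl1)

theorem tendsto_Denv_nhdsNE_zero : Tendsto Denv (nhdsWithin 0 {0}ᶜ) (nhds 0) := by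
  have hcont (f : ℝ → ℝ) (hf : Continuous f) (h0 : f 0 = 0) :
      Tendsto f (nhdsWithin 0 {0}ᶜ) (nhds 0) :=
    (hf.tendsto' 0 0 h0).mono_left nhdsWithin_le_nhds
  have := ((isBigO_Denv_sub.trans_tendsto (hcont _ (by fun_prop) (by simp))).add
    (hcont (fun l => 2 / 3 * l ^ 2) (by fun_prop) (by simp))).congr fun l => sub_add_cancel _ _
  rwa [zero_add] at this

theorem strictMonoOn_Denv : StrictMonoOn Denv (Ioi 0) := fun a ha b hb hab => by
  simp only [Denv, abs_of_pos (show (0 : ℝ) < a from ha), abs_of_pos (show (0 : ℝ) < b from hb)]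
  linarith [strictAntiOn_Gd_div_sinh ha hb hab]

theorem tendsto_Denv_atTop : Tendsto Denv atTop (nhds 2) := by
  have := ((tendsto_Gd_div_sinh_atTop.comp tendsto_abs_atTop_atTop).const_sub 1).const_mul 2
  rwa [sub_zero, mul_one] at this

theorem envelope_bound_properties :
    (Tendsto Denv (nhdsWithin 0 {0}ᶜ) (nhds 0)
      ∧ (fun l : ℝ => Denv l - (2 / 3) * l ^ 2) =O[nhdsWithin 0 {0}ᶜ] fun l : ℝ => l ^ 4)
    ∧ StrictMonoOn Denv (Set.Ioi 0)
    ∧ Tendsto Denv atTop (nhds 2) :=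
  ⟨⟨tendsto_Denv_nhdsNE_zero, isBigO_Denv_sub⟩, strictMonoOn_Denv, tendsto_Denv_atTop⟩
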